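/- The points (0,0,1) and (0,0,−1) are omitted asymptotic values of T: for every (x,y,z)∈ℝ³ with T(x,y,z)≠∞, one has T(x,y,z)≠(0,0,1) and T(x,y,z)≠(0,0,−1); and for each fixed (x,y)∈ℝ², T(x,y,z)→(0,0,1) as z→+∞ and T(x,y,z)→(0,0,−1) as z→−∞. -/

import Mathlib

noncomputable section

open Real Filter Topology Set MeasureTheory
open scoped Classical OnePoint

abbrev R3 := EuclideanSpace ℝ (Fin 3)

/-- The point (x,y,z) ∈ ℝ³. -/
def mk3 (x y z : ℝ) : R3 := (EuclideanSpace.equiv (Fin 3) ℝ).symm ![x, y, z]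

/-- M(x,y) = max(|x|,|y|). -/
def Mxy (x y : ℝ) : ℝ := max |x| |y|

/-- The map T₀ on the beam X = [−π/4,π/4]² × ℝ. -/
def T0 (x y z : ℝ) : R3 :=
  if x = 0 ∧ y = 0 then mk3 0 0 (Real.tanh z)
  else
    mk3 (x * Real.cos (Mxy x y) * Real.sin (Mxy x y) /
          (Real.sqrt (x ^ 2 + y ^ 2) * (Real.cos (Mxy x y) ^ 2 + Real.sinh z ^ 2)))
        (y * Real.cos (Mxy x y) * Real.sin (Mxy x y) /
          (Real.sqrt (x ^ 2 + y ^ 2) * (Real.cos (Mxy x y) ^ 2 + Real.sinh z ^ 2)))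
        (Real.sinh z * Real.cosh z / (Real.cos (Mxy x y) ^ 2 + Real.sinh z ^ 2))

/-- j(t) = ⌊(t+π/4)/(π/2)⌋. -/
def jfold (t : ℝ) : ℤ := ⌊(t + Real.pi / 4) / (Real.pi / 2)⌋

/-- t̂ = (−1)^{j(t)}·(t − j(t)·π/2), the folding of ℝ onto [−π/4,π/4] by reflections. -/
def fold (t : ℝ) : ℝ := (-1 : ℝ) ^ jfold t * (t - jfold t * (Real.pi / 2))

/-- The generalized tangent map T : ℝ³ → ℝ³ ∪ {∞} (one-point compactification). -/
def Tmap (v : R3) : OnePoint R3 :=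
  let w := T0 (fold (v 0)) (fold (v 1)) (v 2)
  if Even (jfold (v 0) + jfold (v 1)) then (w : OnePoint R3)
  else if w = 0 then ∞ else (((‖w‖ ^ 2)⁻¹ • w : R3) : OnePoint R3)

/-- T_λ = λ·T, with λ·∞ = ∞. -/
def Tl (l : ℝ) (v : R3) : OnePoint R3 := Option.map (fun w => l • w) (Tmap v)

/-- The extension of T_λ to ℝ³ ∪ {∞} sending ∞ ↦ ∞, so that iterates are defined;
`(TlHat l)^[k] ↑x ≠ ∞` says the orbit of x has not hit ∞ within the first k steps. -/
def TlHat (l : ℝ) (p : OnePoint R3) : OnePoint R3 := Option.bind p (Tl l)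

/-! On the beam, cos² M ≥ 1/2, which forces the third coordinate
sinh z cosh z / (cos² M + sinh² z) of T₀ into (−1, 1); so T₀ misses (0,0,±1), and so does T,
because inversion in the unit sphere fixes these points. As z → ±∞ the horizontal coordinates of
T₀ decay like 1 / sinh² z, while the third one equals tanh z / (1 + (cos² M − 1) / cosh² z) → ±1;
inversion is continuous at its fixed points (0,0,±1), so T has the same limits. -/

open Metric EuclideanGeometry

@[simp] lemma mk3_apply_zero (a b c : ℝ) : mk3 a b c 0 = a := rfl
@[simp] lemma mk3_apply_one (a b c : ℝ) : mk3 a b c 1 = b := rfl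
@[simp] lemma mk3_apply_two (a b c : ℝ) : mk3 a b c 2 = c := rfl

lemma mk3_zero_zero_mem_sphere {σ : ℝ} (hσ : |σ| = 1) : mk3 0 0 σ ∈ sphere (0 : R3) 1 := by
  simp [EuclideanSpace.norm_eq, Fin.sum_univ_three, mk3, Real.sqrt_sq_eq_abs, hσ]

lemma tendsto_mk3 {α : Type*} {l : Filter α} {f g h : α → ℝ} {a b c : ℝ}
    (hf : Tendsto f l (𝓝 a)) (hg : Tendsto g l (𝓝 b)) (hh : Tendsto h l (𝓝 c)) :
    Tendsto (fun t => mk3 (f t) (g t) (h t)) l (𝓝 (mk3 a b c)) := by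
  refine ((EuclideanSpace.equiv (Fin 3) ℝ).symm.continuous.tendsto _).comp ?_
  rw [tendsto_pi_nhds]
  intro i
  fin_cases i <;> simpa

lemma abs_fold_le (t : ℝ) : |fold t| ≤ π / 4 := by
  have hπ : (0 : ℝ) < π / 2 := by positivity
  have hlo := (le_div_iff₀ hπ).mp (Int.floor_le ((t + π / 4) / (π / 2)))
  have hhi := (div_lt_iff₀ hπ).mp (Int.lt_floor_add_one ((t + π / 4) / (π / 2)))
  rw [fold, jfold, abs_mul, abs_neg_one_zpow, one_mul, abs_le]
  constructor <;> linarith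

lemma half_le_cos_Mxy_sq {x y : ℝ} (hx : |x| ≤ π / 4) (hy : |y| ≤ π / 4) :
    1 / 2 ≤ cos (Mxy x y) ^ 2 := by
  have hM : 0 ≤ Mxy x y := (abs_nonneg x).trans (le_max_left _ _)
  have hM' : Mxy x y ≤ π / 4 := max_le hx hy
  have : 0 ≤ cos (2 * Mxy x y) := cos_nonneg_of_mem_Icc ⟨by linarith [pi_pos], by linarith⟩
  rw [cos_sq]
  linarith

lemma abs_sinh_mul_cosh_lt {c : ℝ} (hc : 1 / 2 ≤ c ^ 2) (z : ℝ) :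
    |sinh z * cosh z| < c ^ 2 + sinh z ^ 2 := by
  have hD : 0 < c ^ 2 + sinh z ^ 2 := by linarith [sq_nonneg (sinh z)]
  refine abs_lt_of_sq_lt_sq ?_ hD.le
  rw [mul_pow, cosh_sq']
  nlinarith [mul_nonneg (sq_nonneg (sinh z)) (by linarith : 0 ≤ 2 * c ^ 2 - 1)]

lemma abs_T0_two_lt_one {x y : ℝ} (hx : |x| ≤ π / 4) (hy : |y| ≤ π / 4) (z : ℝ) :
    |T0 x y z 2| < 1 := by
  unfold T0
  split_ifs
  · simpa [abs_lt] using ⟨neg_one_lt_tanh z, tanh_lt_one z⟩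
  · have hc := half_le_cos_Mxy_sq hx hy
    have hD : 0 < cos (Mxy x y) ^ 2 + sinh z ^ 2 := by linarith [sq_nonneg (sinh z)]
    rw [mk3_apply_two, abs_div, abs_of_pos hD, div_lt_one hD]
    exact abs_sinh_mul_cosh_lt hc z

lemma T0_ne_mk3_zero_zero {x y σ : ℝ} (hx : |x| ≤ π / 4) (hy : |y| ≤ π / 4) (hσ : |σ| = 1)
    (z : ℝ) : T0 x y z ≠ mk3 0 0 σ := by
  intro h
  have := abs_T0_two_lt_one hx hy z
  rw [h, mk3_apply_two, hσ] at this
  exact lt_irrefl _ this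

lemma tendsto_cosh_atTop : Tendsto cosh atTop atTop :=
  tendsto_atTop_mono' atTop ((eventually_ge_atTop 0).mono fun z hz =>
    (self_le_sinh_iff.mpr hz).trans (sinh_lt_cosh z).le) tendsto_id

lemma tendsto_cosh_atBot : Tendsto cosh atBot atTop := by
  simpa [Function.comp_def] using tendsto_cosh_atTop.comp tendsto_neg_atBot_atTop

lemma tendsto_tanh_atTop : Tendsto tanh atTop (𝓝 1) := by
  have h : tanh = fun z => 1 - exp (-z) / cosh z := by
    funext z
    rw [tanh_eq_sinh_div_cosh, ← cosh_sub_sinh, sub_div, div_self (cosh_pos z).ne', sub_sub_cancel]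
  rw [h]
  simpa using tendsto_const_nhds.sub
    ((tendsto_exp_atBot.comp tendsto_neg_atTop_atBot).div_atTop tendsto_cosh_atTop)

lemma tendsto_tanh_atBot : Tendsto tanh atBot (𝓝 (-1)) := by
  simpa [Function.comp_def] using (tendsto_tanh_atTop.comp tendsto_neg_atBot_atTop).neg

lemma sinh_mul_cosh_div (k z : ℝ) :
    sinh z * cosh z / (k + sinh z ^ 2) = tanh z / (1 + (k - 1) / cosh z ^ 2) := by
  have hc : cosh z ≠ 0 := (cosh_pos z).ne'
  rw [one_add_div (pow_ne_zero 2 hc), show cosh z ^ 2 + (k - 1) = k + sinh z ^ 2 by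
    rw [cosh_sq]; ring, tanh_eq_sinh_div_cosh, div_div_eq_mul_div, div_mul_eq_mul_div]
  field_simp

lemma tendsto_T0 (x y : ℝ) {l : Filter ℝ} {σ : ℝ} (hcosh : Tendsto cosh l atTop)
    (htanh : Tendsto tanh l (𝓝 σ)) : Tendsto (T0 x y) l (𝓝 (mk3 0 0 σ)) := by
  unfold T0
  by_cases hxy : x = 0 ∧ y = 0
  · simp only [hxy, and_self, if_true]
    exact tendsto_mk3 tendsto_const_nhds tendsto_const_nhds htanh
  set k := cos (Mxy x y) ^ 2
  have hcosh_sq : Tendsto (fun z => cosh z ^ 2) l atTop :=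
    (tendsto_pow_atTop two_ne_zero).comp hcosh
  have hD : Tendsto (fun z => k + sinh z ^ 2) l atTop :=
    (tendsto_atTop_add_const_right l (k - 1) hcosh_sq).congr fun z => by rw [cosh_sq]; ring
  have hr : 0 < √(x ^ 2 + y ^ 2) := by
    rcases not_and_or.mp hxy with h | h <;> exact sqrt_pos.mpr (by positivity)
  have hside : ∀ p : ℝ, Tendsto (fun z => p / (√(x ^ 2 + y ^ 2) * (k + sinh z ^ 2))) l (𝓝 0) :=
    fun p => tendsto_const_nhds.div_atTop (hD.const_mul_atTop hr)
  have hheight : Tendsto (fun z => sinh z * cosh z / (k + sinh z ^ 2)) l (𝓝 σ) := by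
    have hden : Tendsto (fun z => 1 + (k - 1) / cosh z ^ 2) l (𝓝 1) := by
      simpa using tendsto_const_nhds.add (tendsto_const_nhds.div_atTop hcosh_sq)
    simpa only [sinh_mul_cosh_div, div_one, Pi.div_def] using htanh.div hden one_ne_zero
  simp only [hxy, if_false]
  exact tendsto_mk3 (hside _) (hside _) hheight

lemma inversion_zero_one_eq_smul {E : Type*} [NormedAddCommGroup E] [InnerProductSpace ℝ E]
    (w : E) : inversion (0 : E) 1 w = (‖w‖ ^ 2)⁻¹ • w := by
  simp [inversion, inv_pow]

lemma Tmap_mk3 (x y z : ℝ) : Tmap (mk3 x y z) =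
    if Even (jfold x + jfold y) then ↑(T0 (fold x) (fold y) z)
    else if T0 (fold x) (fold y) z = 0 then ∞
    else ↑(inversion 0 1 (T0 (fold x) (fold y) z)) := by
  simp only [Tmap, mk3_apply_zero, mk3_apply_one, mk3_apply_two, inversion_zero_one_eq_smul]
  congr

lemma Tmap_mk3_ne {x y z : ℝ} {e : R3} (he : e ∈ sphere (0 : R3) 1)
    (hT : T0 (fold x) (fold y) z ≠ e) : Tmap (mk3 x y z) ≠ ↑e := by
  rw [Tmap_mk3]
  split_ifs
  · exact OnePoint.coe_injective.ne hT
  · exact OnePoint.infty_ne_coe e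
  · refine OnePoint.coe_injective.ne fun h => hT ?_
    rw [← inversion_inversion 0 one_ne_zero (T0 _ _ z), h, inversion_of_mem_sphere he]

lemma tendsto_Tmap_mk3 (x y : ℝ) {l : Filter ℝ} {e : R3} (he : e ∈ sphere (0 : R3) 1)
    (hT : Tendsto (T0 (fold x) (fold y)) l (𝓝 e)) :
    Tendsto (fun z => Tmap (mk3 x y z)) l (𝓝 (↑e : OnePoint R3)) := by
  have he0 : e ≠ 0 := ne_of_mem_sphere he one_ne_zero
  simp only [Tmap_mk3]
  by_cases hpar : Even (jfold x + jfold y)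
  · simp only [hpar, if_true]
    exact (OnePoint.continuous_coe.tendsto e).comp hT
  simp only [hpar, if_false]
  have hinv : Tendsto (fun z => inversion 0 1 (T0 (fold x) (fold y) z)) l (𝓝 e) := by
    simpa [inversion_of_mem_sphere he] using
      tendsto_const_nhds.inversion (tendsto_const_nhds (x := (1 : ℝ))) hT he0
  refine ((OnePoint.continuous_coe.tendsto e).comp hinv).congr' ?_
  filter_upwards [hT.eventually_ne he0] with z hz
  simp [hz]

lemma Filter.Tendsto.eventually_exists_coe_dist_lt {X α : Type*} [MetricSpace X] {l : Filter α}
    {f : α → OnePoint X} {e : X} (hf : Tendsto f l (𝓝 ↑e)) {ε : ℝ} (hε : 0 < ε) :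
    ∀ᶠ a in l, ∃ w : X, f a = ↑w ∧ dist w e < ε := by
  rw [OnePoint.nhds_coe_eq] at hf
  filter_upwards [hf (image_mem_map (Metric.ball_mem_nhds e hε))] with a ⟨w, hw, hwa⟩
  exact ⟨w, hwa.symm, hw⟩

lemma eventually_Tmap_mk3_near {l : Filter ℝ} {σ : ℝ} (hσ : |σ| = 1)
    (hcosh : Tendsto cosh l atTop) (htanh : Tendsto tanh l (𝓝 σ)) (x y : ℝ) {ε : ℝ} (hε : 0 < ε) :
    ∀ᶠ z in l, ∃ w : R3, Tmap (mk3 x y z) = ↑w ∧ ‖w - mk3 0 0 σ‖ < ε := by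
  simpa only [dist_eq_norm] using (tendsto_Tmap_mk3 x y (mk3_zero_zero_mem_sphere hσ)
    (tendsto_T0 _ _ hcosh htanh)).eventually_exists_coe_dist_lt hε

/-- (0,0,±1) are omitted asymptotic values of T: T never takes the values
(0,0,1) or (0,0,−1), and for each fixed (x,y), T(x,y,z) → (0,0,±1) as z → ±∞ (in
particular T(x,y,z) is eventually finite). -/
theorem statement19 :
    (∀ x y z : ℝ, Tmap (mk3 x y z) ≠ ↑(mk3 0 0 1) ∧ Tmap (mk3 x y z) ≠ ↑(mk3 0 0 (-1))) ∧
    (∀ x y : ℝ, ∀ ε > (0 : ℝ), ∃ Z : ℝ, ∀ z ≥ Z, ∃ w : R3,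
      Tmap (mk3 x y z) = ↑w ∧ ‖w - mk3 0 0 1‖ < ε) ∧
    (∀ x y : ℝ, ∀ ε > (0 : ℝ), ∃ Z : ℝ, ∀ z ≤ Z, ∃ w : R3,
      Tmap (mk3 x y z) = ↑w ∧ ‖w - mk3 0 0 (-1)‖ < ε) := by
  have homit : ∀ {σ : ℝ}, |σ| = 1 → ∀ x y z : ℝ, Tmap (mk3 x y z) ≠ ↑(mk3 0 0 σ) :=
    fun hσ x y z => Tmap_mk3_ne (mk3_zero_zero_mem_sphere hσ)
      (T0_ne_mk3_zero_zero (abs_fold_le x) (abs_fold_le y) hσ z)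
  refine ⟨fun x y z => ⟨homit (by norm_num) x y z, homit (by norm_num) x y z⟩,
    fun x y ε hε => ?_, fun x y ε hε => ?_⟩
  · exact eventually_atTop.mp
      (eventually_Tmap_mk3_near (by norm_num) tendsto_cosh_atTop tendsto_tanh_atTop x y hε)
  · exact eventually_atBot.mp
      (eventually_Tmap_mk3_near (by norm_num) tendsto_cosh_atBot tendsto_tanh_atBot x y hε)
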